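/- If each f_n commutes with f, each f_n is surjective, Σ_{n=1}^∞ D(f_n, f) < ∞, and the autonomous system (X, f) is equicontinuous, then the non-autonomous system (X, F) is equicontinuous, i.e., for every ε > 0 there exists δ > 0 such that d(x, y) < δ implies d(ω_n(x), ω_n(y)) < ε for all n ∈ ℕ. -/
import Mathlib


open Filter Metric Set

noncomputable def supD {X : Type*} [MetricSpace X] (g h : X → X) : ℝ :=
  ⨆ x, dist (g x) (h x)

def omega {X : Type*} (fn : ℕ → X → X) : ℕ → X → X
  | 0 => id
  | k + 1 => fn (k + 1) ∘ omega fn k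

def omegaSeg {X : Type*} (fn : ℕ → X → X) (n : ℕ) : ℕ → X → X
  | 0 => id
  | k + 1 => fn (n + k + 1) ∘ omegaSeg fn n k

lemma omega_continuous {X : Type*} [MetricSpace X] (fn : ℕ → X → X)
    (hfn : ∀ n, Continuous (fn n)) : ∀ n, Continuous (omega fn n)
  | 0 => continuous_id
  | k + 1 => (hfn (k + 1)).comp (omega_continuous fn hfn k)

lemma dist_le_supD {X : Type*} [MetricSpace X] [CompactSpace X] [Nonempty X]
    {g h : X → X} (hg : Continuous g) (hh : Continuous h) (x : X) :
    dist (g x) (h x) ≤ supD g h := by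
  have hb : BddAbove (Set.range fun x => dist (g x) (h x)) :=
    (isCompact_range ((hg.dist hh))).bddAbove
  exact le_ciSup hb x

lemma supD_nonneg {X : Type*} [MetricSpace X] [Nonempty X] (g h : X → X) :
    0 ≤ supD g h :=
  Real.iSup_nonneg fun _ => dist_nonneg

lemma omegaSeg_succ_left {X : Type*} (fn : ℕ → X → X) (k m : ℕ) :
    omegaSeg fn k (m + 1) = omegaSeg fn (k + 1) m ∘ fn (k + 1) := by
  induction m with
  | zero => simp [omegaSeg]
  | succ m ih =>
    show fn (k + (m + 1) + 1) ∘ omegaSeg fn k (m + 1) = _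
    rw [ih]
    show fn (k + (m + 1) + 1) ∘ (omegaSeg fn (k + 1) m ∘ fn (k + 1))
      = (fn (k + 1 + m + 1) ∘ omegaSeg fn (k + 1) m) ∘ fn (k + 1)
    have : k + (m + 1) + 1 = k + 1 + m + 1 := by omega
    rw [this, Function.comp_assoc]

lemma omega_add {X : Type*} (fn : ℕ → X → X) (k m : ℕ) :
    omega fn (k + m) = omegaSeg fn k m ∘ omega fn k := by
  induction m with
  | zero => simp [omegaSeg]
  | succ m ih =>
    show fn (k + m + 1) ∘ omega fn (k + m) = (fn (k + m + 1) ∘ omegaSeg fn k m) ∘ omega fn k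
    rw [ih, Function.comp_assoc]

lemma key_est {X : Type*} [MetricSpace X] [CompactSpace X] [Nonempty X]
    (f : X → X) (fn : ℕ → X → X) (hf : Continuous f) (hfn : ∀ n, Continuous (fn n))
    (hcomm : ∀ n, fn n ∘ f = f ∘ fn n) :
    ∀ m k (z : X), dist (omegaSeg fn k m z) (f^[m] z) ≤
      ∑ i ∈ Finset.range m, supD (fn (k + i + 1)) f := by
  intro m
  induction m with
  | zero => intro k z; simp [omegaSeg]
  | succ m ih =>
    intro k z
    rw [omegaSeg_succ_left]
    have hC : Function.Commute (fn (k + 1)) f := fun x => congrFun (hcomm (k + 1)) x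
    have hcom : f^[m] (fn (k + 1) z) = fn (k + 1) (f^[m] z) :=
      ((hC.iterate_right m) z).symm
    have h1 : dist (omegaSeg fn (k + 1) m (fn (k + 1) z)) (f^[m] (fn (k + 1) z)) ≤
        ∑ i ∈ Finset.range m, supD (fn (k + 1 + i + 1)) f := ih (k + 1) _
    have h2 : dist (f^[m] (fn (k + 1) z)) (f^[m + 1] z) ≤ supD (fn (k + 1)) f := by
      rw [hcom, Function.iterate_succ_apply']
      exact dist_le_supD (hfn _) hf _
    calc dist (omegaSeg fn (k + 1) m (fn (k + 1) z)) (f^[m + 1] z)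
        ≤ dist (omegaSeg fn (k + 1) m (fn (k + 1) z)) (f^[m] (fn (k + 1) z))
          + dist (f^[m] (fn (k + 1) z)) (f^[m + 1] z) := dist_triangle _ _ _
      _ ≤ (∑ i ∈ Finset.range m, supD (fn (k + 1 + i + 1)) f) + supD (fn (k + 1)) f :=
          add_le_add h1 h2
      _ = ∑ i ∈ Finset.range (m + 1), supD (fn (k + i + 1)) f := by
          rw [Finset.sum_range_succ']
          congr 1
          apply Finset.sum_congr rfl
          intro i _
          have e : k + 1 + i + 1 = k + (i + 1) + 1 := by omega
          rw [e]

lemma fin_unif {X : Type*} [MetricSpace X] [CompactSpace X] (fn : ℕ → X → X)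
    (hfn : ∀ n, Continuous (fn n)) (k : ℕ) {η : ℝ} (hη : 0 < η) :
    ∃ δ > 0, ∀ x y : X, dist x y < δ → ∀ n ≤ k,
      dist (omega fn n x) (omega fn n y) < η := by
  induction k with
  | zero =>
    exact ⟨η, hη, fun x y h n hn => by
      interval_cases n
      simpa [omega] using h⟩
  | succ k ih =>
    obtain ⟨δ₁, hδ₁, H⟩ := ih
    have huc : UniformContinuous (omega fn (k + 1)) :=
      CompactSpace.uniformContinuous_of_continuous (omega_continuous fn hfn (k + 1))
    obtain ⟨δ₂, hδ₂, H₂⟩ := Metric.uniformContinuous_iff.1 huc η hη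
    refine ⟨min δ₁ δ₂, lt_min hδ₁ hδ₂, fun x y h n hn => ?_⟩
    rcases Nat.lt_or_ge n (k + 1) with hlt | hge
    · exact H x y (h.trans_le (min_le_left _ _)) n (Nat.lt_succ_iff.1 hlt)
    · have : n = k + 1 := le_antisymm hn hge
      subst this
      exact H₂ (h.trans_le (min_le_right _ _))

theorem stmt3 {X : Type*} [MetricSpace X] [CompactSpace X] [Nonempty X]
    (f : X → X) (fn : ℕ → X → X)
    (hf : Continuous f) (hfn : ∀ n, Continuous (fn n))
    (hcomm : ∀ n, fn n ∘ f = f ∘ fn n)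
    (hsurj : ∀ n, Function.Surjective (fn n))
    (hsum : Summable fun n => supD (fn (n + 1)) f)
    (heq : ∀ ε > 0, ∃ δ > 0, ∀ x y : X, dist x y < δ →
      ∀ n : ℕ, dist (f^[n] x) (f^[n] y) < ε) :
    ∀ ε > 0, ∃ δ > 0, ∀ x y : X, dist x y < δ →
      ∀ n : ℕ, dist (omega fn n x) (omega fn n y) < ε := by
  intro ε hε
  set g : ℕ → ℝ := fun n => supD (fn (n + 1)) f with hg
  have hε3 : 0 < ε / 3 := by positivity
  -- tail of summable series tends to 0
  have htail : Tendsto (fun k => ∑' i, g (i + k)) atTop (nhds 0) :=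
    tendsto_sum_nat_add g
  obtain ⟨k, hk⟩ := (htail.eventually (gt_mem_nhds hε3)).exists
  -- equicontinuity of f with ε/3
  obtain ⟨δ₁, hδ₁, H₁⟩ := heq (ε / 3) hε3
  -- uniform control of omega fn n for n ≤ k
  obtain ⟨δ, hδ, Hδ⟩ := fin_unif fn hfn k (lt_min hε3 hδ₁)
  refine ⟨δ, hδ, fun x y hxy n => ?_⟩
  rcases le_or_gt n k with hnk | hnk
  · exact (Hδ x y hxy n hnk).trans_le
      ((min_le_left _ _).trans (by linarith))
  · obtain ⟨m, rfl⟩ := Nat.exists_eq_add_of_le hnk.le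
    have hxy' : dist (omega fn k x) (omega fn k y) < δ₁ :=
      (Hδ x y hxy k le_rfl).trans_le (min_le_right _ _)
    have hmid : dist (f^[m] (omega fn k x)) (f^[m] (omega fn k y)) < ε / 3 :=
      H₁ _ _ hxy' m
    have hsum' : Summable fun i => g (i + k) := (summable_nat_add_iff k).2 hsum
    have hbd : ∀ z : X, dist (omegaSeg fn k m z) (f^[m] z) < ε / 3 := by
      intro z
      have h1 := key_est f fn hf hfn hcomm m k z
      have h2 : ∑ i ∈ Finset.range m, supD (fn (k + i + 1)) f
          = ∑ i ∈ Finset.range m, g (i + k) := by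
        apply Finset.sum_congr rfl
        intro i _
        simp only [hg]
        have e : k + i + 1 = i + k + 1 := by omega
        rw [e]
      have h3 : ∑ i ∈ Finset.range m, g (i + k) ≤ ∑' i, g (i + k) :=
        Summable.sum_le_tsum _ (fun i _ => supD_nonneg _ _) hsum'
      calc dist (omegaSeg fn k m z) (f^[m] z)
          ≤ ∑ i ∈ Finset.range m, g (i + k) := by rw [← h2]; exact h1
        _ ≤ ∑' i, g (i + k) := h3
        _ < ε / 3 := hk
    have hrw : ∀ z : X, omega fn (k + m) z = omegaSeg fn k m (omega fn k z) := by
      intro z; rw [omega_add]; rfl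
    rw [hrw x, hrw y]
    calc dist (omegaSeg fn k m (omega fn k x)) (omegaSeg fn k m (omega fn k y))
        ≤ dist (omegaSeg fn k m (omega fn k x)) (f^[m] (omega fn k x))
          + dist (f^[m] (omega fn k x)) (f^[m] (omega fn k y))
          + dist (f^[m] (omega fn k y)) (omegaSeg fn k m (omega fn k y)) :=
          dist_triangle4 _ _ _ _
      _ < ε / 3 + ε / 3 + ε / 3 := by
          have := hbd (omega fn k x)
          have h4 := hbd (omega fn k y)
          rw [dist_comm (f^[m] (omega fn k y))]
          linarith
      _ = ε := by ring
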